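/- For N = 2n, the matrix −iV(θ) := (R(θ) − λI)^{-1}(R(θ) + λI) can be written as I + 2λX(θ) with X(θ) = (R(θ) − λI)^{-1}; consequently, whenever λ(θ)² ≠ e^{(m_{ab}^{(ε)}+m_{ba}^{(ε)})θ} for all a,b,ε, the diagonal potential entries are V_{bb,dd} = −(i/2)∑_ε [λ² + e^{(m_{bd}^{(ε)}+m_{db}^{(ε)})θ}]/[λ² − e^{(m_{bd}^{(ε)}+m_{db}^{(ε)})θ}]. -/

import Mathlib

/-!
Write `F = flipP`, `J = barMatrix` for the involution `(a, b) ↦ (ā, b̄)` and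
`Π_ε = signProj ε = (1 + εJ)/2` for its two eigenprojections. Because `m` is invariant under
bars, `R̂ = ∑_ε D_ε Π_ε` with `D_ε = expDiag ε` the diagonal matrix of the `e^{m^{(ε)}_{ab}θ}`,
and the closed form (5.4) regroups as `X = -∑_ε K_ε (λ + F D_ε) Π_ε` with `K_ε = resolventDiag ε`
the diagonal matrix of the `(λ² - e^{(m^{(ε)}_{ab} + m^{(ε)}_{ba})θ})⁻¹`. The `Π_ε` are orthogonal
idempotents commuting with `F` and the `D_ε`, and `F D_ε F D_ε` is the diagonal matrix of the
`e^{(m^{(ε)}_{ab} + m^{(ε)}_{ba})θ}`, so `(λ + F D_ε)(λ - F D_ε)` is inverted by `K_ε`; hence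
`X (R - λ) = 1` and `X (R + λ) = X (R - λ) + 2λ X = 1 + 2λ X`. The diagonal entries are then
read off the closed form.
-/

open Matrix
open scoped Kronecker

noncomputable section

/-- The `N × N` matrix unit `(ab)`. -/
def E {N : ℕ} (a b : Fin N) : Matrix (Fin N) (Fin N) ℂ := Matrix.single a b 1

/-- Sign `ε = ±1` coded by a Boolean. -/
def sgn (ε : Bool) : ℂ := if ε then 1 else -1

/-- The nested-sequence projector `P_{ab}^{(ε)}` for `N = 2n` (`ā = 2n+1-a` via `Fin.rev`). -/
def P {N : ℕ} (ε : Bool) (a b : Fin N) : Matrix (Fin N × Fin N) (Fin N × Fin N) ℂ :=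
  (1 / 2 : ℂ) •
    (E a a ⊗ₖ E b b + E a.rev a.rev ⊗ₖ E b.rev b.rev +
      sgn ε • (E a a.rev ⊗ₖ E b b.rev + E a.rev a ⊗ₖ E b.rev b))

/-- Embedding of `{1,…,n}` into `{1,…,2n}`. -/
def emb {n : ℕ} (i : Fin n) : Fin (2 * n) := Fin.castLE (by omega) i

/-- `R̂(θ) = ∑_ε ∑_{i,j=1}^n e^{m_{ij}^{(ε)}θ}(P_{ij}^{(ε)} + P_{i j̄}^{(ε)})`. -/
def Rhat {n : ℕ} (m : Bool → Fin (2 * n) → Fin (2 * n) → ℝ) (θ : ℝ) :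
    Matrix (Fin (2 * n) × Fin (2 * n)) (Fin (2 * n) × Fin (2 * n)) ℂ :=
  ∑ ε : Bool, ∑ i : Fin n, ∑ j : Fin n,
    (Real.exp (m ε (emb i) (emb j) * θ) : ℂ) •
      (P ε (emb i) (emb j) + P ε (emb i) (emb j).rev)

/-- The flip matrix `𝐏 = ∑_{a,b}(ab)⊗(ba)`. -/
def flipP (N : ℕ) : Matrix (Fin N × Fin N) (Fin N × Fin N) ℂ :=
  ∑ a : Fin N, ∑ b : Fin N, E a b ⊗ₖ E b a

/-- The closed form `X(θ) = (R(θ) − λI)⁻¹` of eq. (5.4). -/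
def X {N : ℕ} (m : Bool → Fin N → Fin N → ℝ) (θ : ℝ) (lam : ℂ) :
    Matrix (Fin N × Fin N) (Fin N × Fin N) ℂ :=
  (-(1 / 2) : ℂ) • ∑ ε : Bool, ∑ a : Fin N, ∑ b : Fin N,
    (lam ^ 2 - Complex.exp (((m ε a b + m ε b a) * θ : ℝ) : ℂ))⁻¹ •
      (lam • (E a a ⊗ₖ E b b + sgn ε • (E a a.rev ⊗ₖ E b b.rev)) +
        Complex.exp (((m ε b a * θ : ℝ)) : ℂ) •
          (E a b ⊗ₖ E b a + sgn ε • (E a b.rev ⊗ₖ E b a.rev)))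

namespace Matrix

variable {l n R : Type*} [DecidableEq l] [Fintype n] [DecidableEq n]

theorem permMatrix_mul_diagonal [NonAssocSemiring R] (σ : Equiv.Perm n) (d : n → R) :
    σ.permMatrix R * diagonal d = diagonal (d ∘ σ) * σ.permMatrix R := by
  rw [Equiv.Perm.permMatrix, PEquiv.toMatrix_toPEquiv_mul, PEquiv.mul_toMatrix_toPEquiv]
  ext i j
  simp [diagonal_apply, Equiv.eq_symm_apply, eq_comm]

theorem single_mul_permMatrix [NonAssocSemiring R] (i : l) (j : n) (c : R) (σ : Equiv.Perm n) :
    single i j c * σ.permMatrix R = single i (σ j) c := by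
  rw [Equiv.Perm.permMatrix, PEquiv.mul_toMatrix_toPEquiv]
  ext k k'
  simp only [submatrix_apply, id, single_apply, Equiv.eq_symm_apply]

theorem single_mul_diagonal [NonUnitalNonAssocSemiring R] (i : l) (j : n) (c : R) (d : n → R) :
    single i j c * diagonal d = single i j (c * d j) := by
  ext k k'
  rw [mul_diagonal, single_apply, single_apply]
  split_ifs with h
  · rw [h.2]
  · rw [zero_mul]

end Matrix

theorem Fin.rev_ne_self_of_two_mul {n : ℕ} (a : Fin (2 * n)) : a.rev ≠ a := by
  intro h
  have := congrArg Fin.val h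
  rw [Fin.val_rev] at this
  omega

theorem sum_emb_add_rev {M : Type*} [AddCommMonoid M] {n : ℕ} (f : Fin (2 * n) → M) :
    ∑ i : Fin n, (f (emb i) + f (emb i).rev) = ∑ p, f p := by
  rw [Finset.sum_add_distrib, ← Fintype.sum_equiv (finCongr (two_mul n)).symm _ _ (fun _ => rfl),
    Fin.sum_univ_add]
  congr 1
  rw [← Fintype.sum_equiv Fin.revPerm _ _ (fun _ => rfl)]
  refine Fintype.sum_congr _ _ fun i => congrArg f (Fin.ext ?_)
  have := i.isLt
  simp only [emb, Fin.revPerm_apply, Fin.val_rev, Fin.val_castLE, finCongr_symm,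
    Fin.natAdd_eq_addNat, finCongr_apply, Fin.val_cast, Fin.val_addNat]
  omega

lemma sgn_mul_self (ε : Bool) : sgn ε * sgn ε = 1 := by cases ε <;> simp [sgn]

lemma sgn_eq_neg_of_ne {ε ε' : Bool} (h : ε ≠ ε') : sgn ε' = -sgn ε := by
  cases ε <;> cases ε' <;> simp_all [sgn]

section Resolvent

variable {ι K A : Type*} [Fintype ι] [DecidableEq ι] [CommRing K] [Ring A] [Algebra K A]

theorem mul_add_smul_one_eq_of_mul_sub_smul_one_eq_one {X R : A} {lam : K}
    (h : X * (R - lam • 1) = 1) : X * (R + lam • 1) = 1 + (2 * lam) • X := by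
  rw [show R + lam • (1 : A) = (R - lam • 1) + (2 * lam) • 1 by module, mul_add, h, mul_smul_one]

theorem sum_mul_smul_one_sub_mul_sum_eq_one (lam : K) (F : A) (D G e : ι → A)
    (he : ∀ i j, e i * e j = if i = j then e i else 0) (he_sum : ∑ i, e i = 1)
    (hF : ∀ i, Commute (e i) F) (hD : ∀ i j, Commute (e i) (D j))
    (hG : ∀ i, G i * (lam ^ 2 • 1 - F * D i * (F * D i)) = 1) :
    (∑ i, G i * (lam • 1 + F * D i) * e i) * (lam • 1 - F * ∑ j, D j * e j) = 1 := by
  have he_mul : ∀ i, e i * (lam • 1 - F * ∑ j, D j * e j) = (lam • 1 - F * D i) * e i := by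
    intro i
    have : e i * (F * ∑ j, D j * e j) = F * D i * e i := by
      simp only [Finset.mul_sum, ← mul_assoc, (hF i).eq]
      simp only [mul_assoc, (hD i _).eq, he, mul_ite, mul_zero, Finset.sum_ite_eq,
        Finset.mem_univ, if_true]
    rw [mul_sub, this, sub_mul, mul_smul_one, smul_one_mul]
  have hsq : ∀ i, (lam • 1 + F * D i) * (lam • 1 - F * D i) =
      lam ^ 2 • 1 - F * D i * (F * D i) := fun i => by
    simp only [add_mul, mul_sub, smul_one_mul, mul_smul_one]
    module
  calc (∑ i, G i * (lam • 1 + F * D i) * e i) * (lam • 1 - F * ∑ j, D j * e j)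
      = ∑ i, G i * ((lam • 1 + F * D i) * (lam • 1 - F * D i)) * e i := by
        simp only [Finset.sum_mul, mul_assoc, he_mul]
    _ = ∑ i, e i := by simp only [hsq, hG, one_mul]
    _ = 1 := he_sum

end Resolvent

section Operators

variable {N : ℕ}

def revPair (N : ℕ) : Equiv.Perm (Fin N × Fin N) := Equiv.prodCongr Fin.revPerm Fin.revPerm

def swapPair (N : ℕ) : Equiv.Perm (Fin N × Fin N) := Equiv.prodComm _ _

def barMatrix (N : ℕ) : Matrix (Fin N × Fin N) (Fin N × Fin N) ℂ := (revPair N).permMatrix ℂ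

def signProj (N : ℕ) (ε : Bool) : Matrix (Fin N × Fin N) (Fin N × Fin N) ℂ :=
  (1 / 2 : ℂ) • (1 + sgn ε • barMatrix N)

def expDiag (m : Bool → Fin N → Fin N → ℝ) (θ : ℝ) (ε : Bool) :
    Matrix (Fin N × Fin N) (Fin N × Fin N) ℂ :=
  diagonal fun x => Complex.exp ((m ε x.1 x.2 * θ : ℝ) : ℂ)

def resolventDiag (m : Bool → Fin N → Fin N → ℝ) (θ : ℝ) (lam : ℂ) (ε : Bool) :
    Matrix (Fin N × Fin N) (Fin N × Fin N) ℂ :=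
  diagonal fun x => (lam ^ 2 - Complex.exp (((m ε x.1 x.2 + m ε x.2 x.1) * θ : ℝ) : ℂ))⁻¹

lemma flipP_eq_permMatrix : flipP N = (swapPair N).permMatrix ℂ := by
  ext ⟨p, q⟩ ⟨r, s⟩
  simp only [flipP, E, Matrix.sum_apply, kroneckerMap_apply, single_apply, ite_and, mul_ite, mul_one,
    mul_zero, Finset.sum_ite_eq', Finset.mem_univ, if_true, swapPair, PEquiv.toMatrix_apply,
    Equiv.toPEquiv_apply, Equiv.prodComm_apply, Prod.swap_prod_mk, Option.mem_def, Option.some.injEq,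
    Prod.ext_iff, @eq_comm _ s p]
  rw [ite_ite_distrib_right, ite_self]

lemma flipP_mul_flipP : flipP N * flipP N = 1 := by
  rw [flipP_eq_permMatrix, ← Matrix.permMatrix_mul]
  exact Matrix.permMatrix_one

lemma barMatrix_mul_barMatrix : barMatrix N * barMatrix N = 1 := by
  have : revPair N * revPair N = 1 := Equiv.ext fun ⟨_, _⟩ => by simp [revPair]
  rw [barMatrix, ← Matrix.permMatrix_mul, this, Matrix.permMatrix_one]

lemma commute_barMatrix_flipP : Commute (barMatrix N) (flipP N) := by
  rw [Commute, SemiconjBy, flipP_eq_permMatrix, barMatrix, ← Matrix.permMatrix_mul,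
    ← Matrix.permMatrix_mul]
  rfl

lemma flipP_mul_diagonal (d : Fin N × Fin N → ℂ) :
    flipP N * diagonal d = diagonal (d ∘ Prod.swap) * flipP N := by
  rw [flipP_eq_permMatrix, Matrix.permMatrix_mul_diagonal]
  rfl

lemma commute_barMatrix_diagonal {d : Fin N × Fin N → ℂ} (hd : d ∘ revPair N = d) :
    Commute (barMatrix N) (diagonal d) := by
  rw [Commute, SemiconjBy, barMatrix, Matrix.permMatrix_mul_diagonal, hd]

lemma signProj_mul_signProj (ε ε' : Bool) :
    signProj N ε * signProj N ε' = if ε = ε' then signProj N ε else 0 := by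
  have hmul : signProj N ε * signProj N ε' = (1 / 4 : ℂ) •
      ((1 + sgn ε * sgn ε') • 1 + (sgn ε + sgn ε') • barMatrix N) := by
    simp only [signProj, Matrix.smul_mul, Matrix.mul_smul, add_mul, mul_add, one_mul, mul_one,
      barMatrix_mul_barMatrix]
    module
  rw [hmul]
  split_ifs with h
  · rw [← h, sgn_mul_self, signProj]
    module
  · rw [sgn_eq_neg_of_ne h, mul_neg, sgn_mul_self]
    module

lemma sum_signProj : ∑ ε, signProj N ε = 1 := by
  rw [Fintype.sum_bool, signProj, signProj, sgn, sgn]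
  simp only [if_true, Bool.false_eq_true, if_false]
  module

lemma commute_signProj_of_commute_barMatrix {M : Matrix (Fin N × Fin N) (Fin N × Fin N) ℂ}
    (h : Commute (barMatrix N) M) (ε : Bool) : Commute (signProj N ε) M :=
  ((Commute.one_left M).add_left (h.smul_left _)).smul_left _

lemma E_kronecker_E_mul_barMatrix (a b c d : Fin N) :
    (E a b ⊗ₖ E c d) * barMatrix N = E a b.rev ⊗ₖ E c d.rev := by
  simp only [E, single_kronecker_single, barMatrix, Matrix.single_mul_permMatrix]
  rfl

lemma E_kronecker_E_mul_flipP (a b : Fin N) : (E a a ⊗ₖ E b b) * flipP N = E a b ⊗ₖ E b a := by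
  simp only [E, single_kronecker_single, flipP_eq_permMatrix, Matrix.single_mul_permMatrix]
  rfl

lemma E_kronecker_E_mul_diagonal (a b c d : Fin N) (w : Fin N × Fin N → ℂ) :
    (E a b ⊗ₖ E c d) * diagonal w = w (b, d) • (E a b ⊗ₖ E c d) := by
  rw [E, E, single_kronecker_single, Matrix.single_mul_diagonal, smul_single, smul_eq_mul,
    mul_comm]

lemma P_eq_mul_signProj (ε : Bool) (a b : Fin N) :
    P ε a b = (E a a ⊗ₖ E b b + E a.rev a.rev ⊗ₖ E b.rev b.rev) * signProj N ε := by
  simp only [P, signProj, mul_smul_comm, mul_add, mul_one, add_mul, E_kronecker_E_mul_barMatrix,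
    Fin.rev_rev]

lemma X_eq_neg_sum (m : Bool → Fin N → Fin N → ℝ) (θ : ℝ) (lam : ℂ) :
    X m θ lam = -∑ ε, resolventDiag m θ lam ε * (lam • 1 + flipP N * expDiag m θ ε) *
      signProj N ε := by
  rw [X, neg_smul, neg_inj, Finset.smul_sum]
  refine Finset.sum_congr rfl fun ε _ => ?_
  have hK : resolventDiag m θ lam ε = ∑ a, ∑ b,
      (lam ^ 2 - Complex.exp (((m ε a b + m ε b a) * θ : ℝ) : ℂ))⁻¹ • (E a a ⊗ₖ E b b) := by
    simp only [resolventDiag, E, single_kronecker_single, mul_one, smul_single, smul_eq_mul]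
    rw [← sum_single_eq_diagonal, Fintype.sum_prod_type]
  rw [hK, Finset.sum_mul, Finset.sum_mul, Finset.smul_sum]
  refine Finset.sum_congr rfl fun a _ => ?_
  rw [Finset.sum_mul, Finset.sum_mul, Finset.smul_sum]
  refine Finset.sum_congr rfl fun b _ => ?_
  simp only [smul_mul_assoc, mul_add, mul_smul_comm, mul_one, ← mul_assoc, E_kronecker_E_mul_flipP,
    expDiag, E_kronecker_E_mul_diagonal, signProj, add_mul, E_kronecker_E_mul_barMatrix]
  module

lemma flipP_mul_expDiag_sq (m : Bool → Fin N → Fin N → ℝ) (θ : ℝ) (ε : Bool) :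
    flipP N * expDiag m θ ε * (flipP N * expDiag m θ ε) =
      diagonal fun x => Complex.exp (((m ε x.1 x.2 + m ε x.2 x.1) * θ : ℝ) : ℂ) := by
  rw [expDiag]
  nth_rw 1 [flipP_mul_diagonal]
  rw [mul_assoc, ← mul_assoc (flipP N) (flipP N), flipP_mul_flipP, one_mul, diagonal_mul_diagonal]
  congr 1
  funext x
  rw [Function.comp_apply, Prod.fst_swap, Prod.snd_swap, ← Complex.exp_add]
  push_cast
  ring_nf

lemma resolventDiag_mul_smul_one_sub (m : Bool → Fin N → Fin N → ℝ) (θ : ℝ) (lam : ℂ)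
    (hlam : ∀ (ε : Bool) (a b : Fin N),
      lam ^ 2 ≠ Complex.exp (((m ε a b + m ε b a) * θ : ℝ) : ℂ)) (ε : Bool) :
    resolventDiag m θ lam ε *
      (lam ^ 2 • 1 - flipP N * expDiag m θ ε * (flipP N * expDiag m θ ε)) = 1 := by
  rw [flipP_mul_expDiag_sq, smul_one_eq_diagonal, diagonal_sub, resolventDiag,
    diagonal_mul_diagonal, ← diagonal_one]
  congr 1
  funext x
  exact inv_mul_cancel₀ (sub_ne_zero.mpr (hlam ε x.1 x.2))

end Operators

section Braid

variable {n : ℕ} (m : Bool → Fin (2 * n) → Fin (2 * n) → ℝ) (θ : ℝ)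

lemma sum_emb_smul_eq_diagonal (f : Fin (2 * n) → Fin (2 * n) → ℂ)
    (hf : ∀ a b, f a.rev b = f a b ∧ f a b.rev = f a b) :
    ∑ i : Fin n, ∑ j : Fin n, f (emb i) (emb j) •
      (E (emb i) (emb i) ⊗ₖ E (emb j) (emb j) +
          E (emb i).rev (emb i).rev ⊗ₖ E (emb j).rev (emb j).rev +
        (E (emb i) (emb i) ⊗ₖ E (emb j).rev (emb j).rev +
          E (emb i).rev (emb i).rev ⊗ₖ E (emb j) (emb j))) =
      diagonal fun x => f x.1 x.2 := by
  let t p q := f p q • (E p p ⊗ₖ E q q)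
  calc _ = ∑ i : Fin n, ((∑ j : Fin n, (t (emb i) (emb j) + t (emb i) (emb j).rev)) +
        ∑ j : Fin n, (t (emb i).rev (emb j) + t (emb i).rev (emb j).rev)) := by
        simp only [t, hf, ← Finset.sum_add_distrib, smul_add]
        exact Finset.sum_congr rfl fun i _ => Finset.sum_congr rfl fun j _ => by abel
    _ = ∑ p, ∑ q, t p q := by
        simp only [sum_emb_add_rev]
        exact sum_emb_add_rev fun p => ∑ q, t p q
    _ = _ := by
        simp only [t, E, single_kronecker_single, mul_one, smul_single, smul_eq_mul]
        rw [← sum_single_eq_diagonal, Fintype.sum_prod_type]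

variable {m}

lemma Rhat_eq_sum (hm : ∀ ε a b, m ε a b = m ε a.rev b ∧ m ε a b = m ε a b.rev) :
    Rhat m θ = ∑ ε, expDiag m θ ε * signProj (2 * n) ε := by
  refine Finset.sum_congr rfl fun ε _ => ?_
  simp only [P_eq_mul_signProj, Fin.rev_rev, ← add_mul, ← smul_mul_assoc, ← Finset.sum_mul]
  congr 1
  simpa only [expDiag, Complex.ofReal_exp] using sum_emb_smul_eq_diagonal
    (fun a b => Complex.exp ((m ε a b * θ : ℝ) : ℂ))
    (fun a b => ⟨by rw [← (hm ε a b).1], by rw [← (hm ε a b).2]⟩)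

lemma commute_signProj_expDiag (hm : ∀ ε a b, m ε a b = m ε a.rev b ∧ m ε a b = m ε a b.rev)
    (ε ε' : Bool) : Commute (signProj (2 * n) ε) (expDiag m θ ε') :=
  commute_signProj_of_commute_barMatrix (commute_barMatrix_diagonal (funext fun x => by
    simp [revPair, ← (hm ε' _ _).1, ← (hm ε' _ _).2])) ε

lemma X_mul_flipP_mul_Rhat_sub (hm : ∀ ε a b, m ε a b = m ε a.rev b ∧ m ε a b = m ε a b.rev)
    (lam : ℂ) (hlam : ∀ (ε : Bool) (a b : Fin (2 * n)),
      lam ^ 2 ≠ Complex.exp (((m ε a b + m ε b a) * θ : ℝ) : ℂ)) :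
    X m θ lam * (flipP (2 * n) * Rhat m θ - lam • 1) = 1 := by
  rw [X_eq_neg_sum, Rhat_eq_sum θ hm, neg_mul, ← mul_neg, neg_sub]
  exact sum_mul_smul_one_sub_mul_sum_eq_one lam _ _ _ _ signProj_mul_signProj sum_signProj
    (commute_signProj_of_commute_barMatrix commute_barMatrix_flipP)
    (commute_signProj_expDiag θ hm) (resolventDiag_mul_smul_one_sub m θ lam hlam)

lemma X_apply_self (lam : ℂ) {b d : Fin (2 * n)} (hb : d ≠ b) (hb' : d ≠ b.rev) :
    X m θ lam (b, d) (b, d) =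
      -(1 / 2 * (lam * ∑ ε, (lam ^ 2 - Complex.exp (((m ε b d + m ε d b) * θ : ℝ) : ℂ))⁻¹)) := by
  simp [X_eq_neg_sum, mul_add, diagonal_mul, signProj, barMatrix, flipP_eq_permMatrix,
    Equiv.Perm.permMatrix, PEquiv.toMatrix_toPEquiv_mul, PEquiv.mul_toMatrix_toPEquiv,
    resolventDiag, expDiag, swapPair, revPair, Prod.ext_iff, hb, hb', Ne.symm hb,
    (Fin.rev_ne_self_of_two_mul b).symm]

end Braid

/-- For `N = 2n`, whenever `λ² ≠ e^{(m_{ab}^{(ε)}+m_{ba}^{(ε)})θ}` for all `a,b,ε`: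
`−i𝐕(θ) = X(θ)(R(θ) + λI) = I + 2λ X(θ)` (with `R(θ) = 𝐏R̂(θ)` and
`X(θ) = (R(θ) − λI)⁻¹` given by its closed form), and the diagonal potential
coefficients (`𝐕 = ∑ V_{ab,cd}(ab)⊗(cd)`, so `V_{bb,dd}` is the entry of
`𝐕 = i(X(R+λI))` at row `(b,d)`, column `(b,d)`; for generic labels, `d ∉ {b, b̄}`) are
`V_{bb,dd} = −(i/2) ∑_ε (λ² + e^{(m_{bd}^{(ε)}+m_{db}^{(ε)})θ})/(λ² − e^{(m_{bd}^{(ε)}+m_{db}^{(ε)})θ})`. -/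
theorem stmt_19 (n : ℕ) (m : Bool → Fin (2 * n) → Fin (2 * n) → ℝ)
    (hm : ∀ ε a b, m ε a b = m ε a.rev b ∧ m ε a b = m ε a b.rev) (θ : ℝ) (lam : ℂ)
    (hlam : ∀ (ε : Bool) (a b : Fin (2 * n)),
      lam ^ 2 ≠ Complex.exp (((m ε a b + m ε b a) * θ : ℝ) : ℂ)) :
    X m θ lam * (flipP (2 * n) * Rhat m θ + lam • 1) = 1 + (2 * lam) • X m θ lam ∧
      ∀ b d : Fin (2 * n), d ≠ b → d ≠ b.rev →
        (Complex.I • (X m θ lam * (flipP (2 * n) * Rhat m θ + lam • 1))) (b, d) (b, d) =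
          -(Complex.I / 2) * ∑ ε : Bool,
            (lam ^ 2 + Complex.exp (((m ε b d + m ε d b) * θ : ℝ) : ℂ)) /
              (lam ^ 2 - Complex.exp (((m ε b d + m ε d b) * θ : ℝ) : ℂ)) := by
  have hV := mul_add_smul_one_eq_of_mul_sub_smul_one_eq_one
    (X_mul_flipP_mul_Rhat_sub θ hm lam hlam)
  refine ⟨hV, fun b d hb hb' => ?_⟩
  rw [hV, Matrix.smul_apply, Matrix.add_apply, Matrix.smul_apply, X_apply_self θ lam hb hb',
    one_apply_eq, smul_eq_mul, smul_eq_mul, Fintype.sum_bool, Fintype.sum_bool]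
  have h₁ := sub_ne_zero.mpr (hlam true b d)
  have h₂ := sub_ne_zero.mpr (hlam false b d)
  generalize Complex.exp (((m true b d + m true d b) * θ : ℝ) : ℂ) = e₁ at h₁ ⊢
  generalize Complex.exp (((m false b d + m false d b) * θ : ℝ) : ℂ) = e₂ at h₂ ⊢
  field_simp
  ring
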